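/- If A and B are n×n positive semidefinite complex matrices, then n·(det A · det B)^(1/n) ≤ tr(AB). -/

import Mathlib

/-! Write `A = Dᴴ D`. Then `C = D B Dᴴ` is positive semidefinite with `det C = det A * det B` and
`tr C = tr (A B)`, and AM–GM applied to the eigenvalues of `C` gives `n (det C)^(1/n) ≤ tr C`. -/

open scoped ComplexOrder

namespace Matrix

variable {m 𝕜 : Type*} [Fintype m] [DecidableEq m] [RCLike 𝕜]

theorem PosSemidef.card_mul_det_rpow_le_trace {A : Matrix m m 𝕜} (hA : A.PosSemidef) :
    (Fintype.card m : ℝ) * RCLike.re A.det ^ ((1 : ℝ) / Fintype.card m) ≤ RCLike.re A.trace := by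
  rcases isEmpty_or_nonempty m with _ | _
  · simp
  set ev := hA.isHermitian.eigenvalues
  have hdet : RCLike.re A.det = ∏ i, ev i := by
    rw [hA.isHermitian.det_eq_prod_eigenvalues, ← RCLike.ofReal_prod, RCLike.ofReal_re]
  have htrace : RCLike.re A.trace = ∑ i, ev i := by
    rw [hA.isHermitian.trace_eq_sum_eigenvalues, ← RCLike.ofReal_sum, RCLike.ofReal_re]
  have hcard : (0 : ℝ) < Fintype.card m := by exact_mod_cast Fintype.card_pos
  have amgm := Real.geom_mean_le_arith_mean Finset.univ (fun _ ↦ 1) ev (fun _ _ ↦ zero_le_one)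
    (by simpa using hcard) (fun i _ ↦ hA.eigenvalues_nonneg i)
  simp only [Real.rpow_one, one_mul, Finset.sum_const, Finset.card_univ, nsmul_eq_mul, mul_one]
    at amgm
  rw [hdet, htrace, one_div]
  rwa [le_div_iff₀' hcard] at amgm

open scoped MatrixOrder in
theorem PosSemidef.exists_posSemidef_det_eq_trace_eq_mul {A B : Matrix m m 𝕜}
    (hA : A.PosSemidef) (hB : B.PosSemidef) :
    ∃ C : Matrix m m 𝕜, C.PosSemidef ∧ C.det = A.det * B.det ∧ C.trace = (A * B).trace := by
  obtain ⟨D, rfl⟩ := CStarAlgebra.nonneg_iff_eq_star_mul_self.mp hA.nonneg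
  refine ⟨D * B * Dᴴ, hB.mul_mul_conjTranspose_same D, ?_, ?_⟩
  · rw [star_eq_conjTranspose, det_mul, det_mul, det_mul]; ring
  · rw [star_eq_conjTranspose, trace_mul_cycle, Matrix.mul_assoc]

end Matrix

theorem det_det_rpow_le_trace_mul {n : ℕ} (A B : Matrix (Fin n) (Fin n) ℂ)
    (hA : A.PosSemidef) (hB : B.PosSemidef) :
    (n : ℝ) * ((A.det.re * B.det.re) ^ ((1 : ℝ) / n)) ≤ ((A * B).trace).re := by
  obtain ⟨C, hC, hdet, htrace⟩ := hA.exists_posSemidef_det_eq_trace_eq_mul hB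
  have hdet_re : C.det.re = A.det.re * B.det.re := by
    obtain ⟨-, hAim⟩ := Complex.nonneg_iff.mp hA.det_nonneg
    rw [hdet, Complex.mul_re, ← hAim, zero_mul, sub_zero]
  simpa [hdet_re, htrace] using hC.card_mul_det_rpow_le_trace
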